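/- Let A be an L-nilpotent skew brace of class k. Then the group (A,∘) is nilpotent of class at most k, and the k-th term of the lower central series of (A,∘) is contained in the annihilator Ann(A) = {a | ∀b, b∘a = a∘b = a·b = b·a}. In particular, if A is a left nilpotent skew brace with (A,·) nilpotent, then (A,∘) is nilpotent. -/

import Mathlib

/-- A skew brace structure on a group `(A,·)`: a second group operation `∘`
(with identity `e` and inverse `cinv`) satisfying
`a ∘ (b · c) = (a ∘ b) · a⁻¹ · (a ∘ c)`. -/
structure SkewBrace (A : Type*) [Group A] where
  circ : A → A → A
  e : A
  cinv : A → A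
  circ_assoc : ∀ a b c, circ (circ a b) c = circ a (circ b c)
  e_circ : ∀ a, circ e a = a
  circ_e : ∀ a, circ a e = a
  cinv_circ : ∀ a, circ (cinv a) a = e
  circ_cinv : ∀ a, circ a (cinv a) = e
  compat : ∀ a b c, circ a (b * c) = circ a b * a⁻¹ * circ a c

/-- The λ-map of a skew brace: `λ_a(b) = a⁻¹ · (a ∘ b)`. -/
def SkewBrace.lam {A : Type*} [Group A] (B : SkewBrace A) (a b : A) : A :=
  a⁻¹ * B.circ a b

/-- The commutator `a ∘ b ∘ a°⁻¹ ∘ b°⁻¹` in the group `(A,∘)`. -/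
def SkewBrace.ccomm {A : Type*} [Group A] (B : SkewBrace A) (a b : A) : A :=
  B.circ (B.circ (B.circ a b) (B.cinv a)) (B.cinv b)

/-- A subset closed under the group operations of `(A,∘)`. -/
def SkewBrace.IsCircSubgroup {A : Type*} [Group A] (B : SkewBrace A)
    (S : Set A) : Prop :=
  B.e ∈ S ∧ (∀ x ∈ S, ∀ y ∈ S, B.circ x y ∈ S) ∧ (∀ x ∈ S, B.cinv x ∈ S)

/-! The `∘`-lower central series is controlled by the sets
`Γᵢ = {x ∈ Lⁱ⁺¹ | x * Lʲ⁺¹ ⊆ Lⁱ⁺ʲ⁺²}` (`starGraded L i`). Since `x ↦ λₓ` is a homomorphism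
from `(A,∘)` to `Aut(A,·)` and `x ∘ y = x · (x * y) · y`, each `Γᵢ` is a subgroup of `(A,∘)`.
For `b ∈ Γᵢ` the automorphisms `λ_a` and `λ_b` commute on `Lʲ⁺¹` modulo `Lⁱ⁺ʲ⁺³`, and `λ` sends
`[a,b]_∘` to their commutator; this puts `[a,b]_∘` in `Γᵢ₊₁`. Hence `γᵢ₊₁(A,∘) ⊆ Γᵢ ⊆ Lⁱ⁺¹`,
and when `Lᵏ⁺¹ = 1` the elements `x` of `Γₖ₋₁` lie in the annihilator, as `x * b`, `b * x` and
`[x, b]` all lie in `Lᵏ⁺¹`. -/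

namespace SkewBrace

variable {A : Type*} [Group A] (B : SkewBrace A)

lemma circ_one (a : A) : B.circ a 1 = a := by
  have h := B.compat a 1 1
  rw [mul_one, mul_assoc, left_eq_mul, inv_mul_eq_one] at h
  exact h.symm

lemma e_eq_one : B.e = 1 := by
  simpa only [B.circ_one] using B.e_circ 1

lemma one_circ (a : A) : B.circ 1 a = a := by
  rw [← B.e_eq_one, B.e_circ]

lemma circ_cinv_eq_one (a : A) : B.circ a (B.cinv a) = 1 := by
  rw [B.circ_cinv, B.e_eq_one]

lemma cinv_circ_eq_one (a : A) : B.circ (B.cinv a) a = 1 := by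
  rw [B.cinv_circ, B.e_eq_one]

lemma lam_mul (a b c : A) : B.lam a (b * c) = B.lam a b * B.lam a c := by
  unfold lam; rw [B.compat]; group

lemma circ_inv (a b : A) : B.circ a b⁻¹ = a * (B.circ a b)⁻¹ * a := by
  have h := B.compat a b b⁻¹
  rw [mul_inv_cancel, B.circ_one] at h
  calc B.circ a b⁻¹ = (B.circ a b * a⁻¹)⁻¹ * (B.circ a b * a⁻¹ * B.circ a b⁻¹) := by group
    _ = a * (B.circ a b)⁻¹ * a := by rw [← h]; group

lemma lam_circ (a b c : A) : B.lam (B.circ a b) c = B.lam a (B.lam b c) := by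
  unfold lam
  rw [B.compat a b⁻¹ (B.circ b c), B.circ_inv, ← B.circ_assoc]
  group

lemma lam_one (c : A) : B.lam 1 c = c := by
  unfold lam; rw [B.one_circ]; group

lemma lam_lam_cinv (a c : A) : B.lam a (B.lam (B.cinv a) c) = c := by
  rw [← B.lam_circ, B.circ_cinv_eq_one, B.lam_one]

lemma cinv_eq_lam_inv (a : A) : B.cinv a = B.lam (B.cinv a) a⁻¹ := by
  have h : B.lam a (B.cinv a) = a⁻¹ := by
    unfold lam; rw [B.circ_cinv_eq_one, mul_one]
  rw [← h, ← B.lam_circ, B.cinv_circ_eq_one, B.lam_one]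

lemma lam_ccomm (a b c : A) : B.lam (B.ccomm a b) c
    = B.lam a (B.lam b (B.lam (B.cinv a) (B.lam (B.cinv b) c))) := by
  unfold ccomm; rw [B.lam_circ, B.lam_circ, B.lam_circ]

lemma ccomm_circ (a b : A) : B.circ (B.ccomm a b) (B.circ b a) = B.circ a b := by
  unfold ccomm
  rw [B.circ_assoc, ← B.circ_assoc (B.cinv b), B.cinv_circ, B.e_circ, B.circ_assoc,
    B.cinv_circ, B.circ_e]

/-- The operation written `a * b` in the paper. -/
def star (a b : A) : A := a⁻¹ * B.circ a b * b⁻¹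

lemma lam_eq_star_mul (a b : A) : B.lam a b = B.star a b * b := by
  unfold star lam; group

lemma circ_eq_mul_star_mul (a b : A) : B.circ a b = a * B.star a b * b := by
  unfold star; group

lemma star_eq_lam_mul_inv (a b : A) : B.star a b = B.lam a b * b⁻¹ := by
  unfold star lam; group

lemma star_one (c : A) : B.star 1 c = 1 := by
  unfold star; rw [B.one_circ]; group

lemma star_circ (x y c : A) : B.star (B.circ x y) c = B.star x (B.lam y c) * B.star y c := by
  simp only [star, ← lam.eq_def, lam_circ]; group

lemma star_cinv (x c : A) : B.star (B.cinv x) c = (B.star x (B.lam (B.cinv x) c))⁻¹ := by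
  simp only [star, ← lam.eq_def, lam_lam_cinv]; group

def starGraded (L : ℕ → Subgroup A) (i : ℕ) : Set A :=
  {x | x ∈ L i ∧ ∀ j, ∀ c ∈ L j, B.star x c ∈ L (i + j + 1)}

/-- `L i` plays the role of `Lⁱ⁺¹(A)`. -/
structure IsLSeries (L : ℕ → Subgroup A) : Prop where
  zero : L 0 = ⊤
  succ : ∀ i, L (i + 1) = Subgroup.closure
    {x : A | ∃ a b : A, b ∈ L i ∧ (x = B.star a b ∨ x = a * b * a⁻¹ * b⁻¹)}

namespace IsLSeries

variable {B} {L : ℕ → Subgroup A}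

lemma star_mem (hL : B.IsLSeries L) {i : ℕ} (a : A) {b : A} (hb : b ∈ L i) :
    B.star a b ∈ L (i + 1) := by
  rw [hL.succ i]
  exact Subgroup.subset_closure ⟨a, b, hb, Or.inl rfl⟩

lemma commutator_mem (hL : B.IsLSeries L) {i : ℕ} (a : A) {b : A} (hb : b ∈ L i) :
    a * b * a⁻¹ * b⁻¹ ∈ L (i + 1) := by
  rw [hL.succ i]
  exact Subgroup.subset_closure ⟨a, b, hb, Or.inr rfl⟩

lemma succ_le (hL : B.IsLSeries L) (i : ℕ) : L (i + 1) ≤ L i := by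
  induction i with
  | zero => exact hL.zero ▸ le_top
  | succ n ih =>
    rw [hL.succ (n + 1), Subgroup.closure_le]
    rintro x ⟨a, b, hb, rfl | rfl⟩
    · exact hL.star_mem a (ih hb)
    · exact hL.commutator_mem a (ih hb)

lemma antitone (hL : B.IsLSeries L) : Antitone L :=
  antitone_nat_of_succ_le hL.succ_le

lemma mem_of_le (hL : B.IsLSeries L) {i j : ℕ} (hij : i ≤ j) {x : A} (hx : x ∈ L j) :
    x ∈ L i :=
  hL.antitone hij hx

lemma mem_zero (hL : B.IsLSeries L) (x : A) : x ∈ L 0 :=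
  hL.zero ▸ Subgroup.mem_top x

lemma normal (hL : B.IsLSeries L) (i : ℕ) : (L i).Normal := by
  cases i with
  | zero => exact hL.zero ▸ Subgroup.normal_top
  | succ n =>
    refine ⟨fun x hx g => ?_⟩
    have hcomm := hL.commutator_mem g (hL.succ_le n hx)
    simpa using mul_mem hcomm hx

lemma lam_mem (hL : B.IsLSeries L) {i : ℕ} (a : A) {x : A} (hx : x ∈ L i) :
    B.lam a x ∈ L i := by
  rw [B.lam_eq_star_mul]
  exact mul_mem (hL.succ_le i (hL.star_mem a hx)) hx

lemma mem_starGraded_zero (hL : B.IsLSeries L) (x : A) : x ∈ B.starGraded L 0 :=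
  ⟨hL.mem_zero x, fun j _ hc => hL.mem_of_le (by omega) (hL.star_mem x hc)⟩

lemma isCircSubgroup_starGraded (hL : B.IsLSeries L) (i : ℕ) :
    B.IsCircSubgroup (B.starGraded L i) := by
  refine ⟨?_, ?_, ?_⟩
  · rw [B.e_eq_one]
    exact ⟨one_mem _, fun j c _ => by rw [B.star_one]; exact one_mem _⟩
  · rintro y ⟨hy, hy_star⟩ z ⟨hz, hz_star⟩
    refine ⟨?_, fun j c hc => ?_⟩
    · rw [B.circ_eq_mul_star_mul]
      exact mul_mem (mul_mem hy (hL.mem_of_le (by omega) (hy_star i z hz))) hz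
    · rw [B.star_circ]
      exact mul_mem (hy_star j _ (hL.lam_mem z hc)) (hz_star j c hc)
  · rintro y ⟨hy, hy_star⟩
    refine ⟨?_, fun j c hc => ?_⟩
    · rw [B.cinv_eq_lam_inv]
      exact hL.lam_mem _ (inv_mem hy)
    · rw [B.star_cinv]
      exact inv_mem (hy_star j _ (hL.lam_mem _ hc))

lemma lam_lam_comm_mem (hL : B.IsLSeries L) {i : ℕ} {b : A} (hb : b ∈ B.starGraded L i)
    (a : A) {j : ℕ} {c : A} (hc : c ∈ L j) :
    B.lam a (B.lam b c) * (B.lam b (B.lam a c))⁻¹ ∈ L (i + j + 2) := by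
  have hm : B.star b c ∈ L (i + j + 1) := hb.2 j c hc
  have hu : B.star a c ∈ L (j + 1) := hL.star_mem a hc
  have key : B.lam a (B.lam b c) * (B.lam b (B.lam a c))⁻¹
      = B.star a (B.star b c)
        * (B.star a c * B.star b c * (B.star a c)⁻¹ * (B.star b c)⁻¹)⁻¹
        * (B.star b (B.star a c))⁻¹ := by
    simp only [B.lam_mul, B.lam_eq_star_mul]
    group
  rw [key]
  refine mul_mem (mul_mem (hL.star_mem _ hm) (inv_mem (hL.commutator_mem _ hm))) (inv_mem ?_)
  exact hL.mem_of_le (by omega) (hb.2 (j + 1) _ hu)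

lemma star_ccomm_mem (hL : B.IsLSeries L) {i : ℕ} {b : A} (hb : b ∈ B.starGraded L i)
    (a : A) {j : ℕ} {c : A} (hc : c ∈ L j) :
    B.star (B.ccomm a b) c ∈ L (i + 1 + j + 1) := by
  have hc' : B.lam (B.cinv a) (B.lam (B.cinv b) c) ∈ L j :=
    hL.lam_mem _ (hL.lam_mem _ hc)
  have h := hL.lam_lam_comm_mem hb a hc'
  rw [B.lam_lam_cinv a, B.lam_lam_cinv b] at h
  rw [B.star_eq_lam_mul_inv, B.lam_ccomm]
  exact hL.mem_of_le (by omega) h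

lemma ccomm_mem (hL : B.IsLSeries L) {i : ℕ} {b : A} (hb : b ∈ B.starGraded L i) (a : A) :
    B.ccomm a b ∈ L (i + 1) := by
  obtain ⟨q, hq, hcirc⟩ : ∃ q ∈ L (i + 1), B.ccomm a b * q * B.circ b a = B.circ a b :=
    ⟨_, hL.mem_of_le (by omega) (hL.star_ccomm_mem hb a (hL.mem_zero (B.circ b a))),
      by rw [← B.circ_eq_mul_star_mul, B.ccomm_circ]⟩
  have hp : B.star a b ∈ L (i + 1) := hL.star_mem a hb.1
  have hr : B.star b a ∈ L (i + 1) := hb.2 0 a (hL.mem_zero a)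
  have N := hL.normal (i + 1)
  -- `(a ∘ b) · (b ∘ a)⁻¹ = a (a * b) b a⁻¹ (b * a)⁻¹ b⁻¹` is `[a, b]` modulo `L (i + 1)`
  have hg : B.ccomm a b = (a * B.star a b * a⁻¹)
      * ((a * b * a⁻¹) * (B.star b a)⁻¹ * (a * b * a⁻¹)⁻¹) * (a * b * a⁻¹ * b⁻¹) * q⁻¹ := by
    calc B.ccomm a b = B.circ a b * (B.circ b a)⁻¹ * q⁻¹ := by rw [← hcirc]; group
      _ = _ := by rw [B.circ_eq_mul_star_mul a b, B.circ_eq_mul_star_mul b a]; group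
  rw [hg]
  exact mul_mem (mul_mem (mul_mem (N.conj_mem _ hp a) (N.conj_mem _ (inv_mem hr) _))
    (hL.commutator_mem a hb.1)) (inv_mem hq)

lemma ccomm_mem_starGraded (hL : B.IsLSeries L) {i : ℕ} {b : A}
    (hb : b ∈ B.starGraded L i) (a : A) : B.ccomm a b ∈ B.starGraded L (i + 1) :=
  ⟨hL.ccomm_mem hb a, fun _ _ hc => hL.star_ccomm_mem hb a hc⟩

lemma subset_starGraded (hL : B.IsLSeries L) {γ : ℕ → Set A}
    (hγ : ∀ i, ∀ S : Set A, B.IsCircSubgroup S →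
      (∀ a b : A, b ∈ γ i → B.ccomm a b ∈ S) → γ (i + 1) ⊆ S) :
    ∀ i, γ i ⊆ B.starGraded L i
  | 0 => fun x _ => hL.mem_starGraded_zero x
  | i + 1 => hγ i _ (hL.isCircSubgroup_starGraded (i + 1))
      fun a _ hb => hL.ccomm_mem_starGraded (hL.subset_starGraded hγ i hb) a

lemma annihilates_of_mem_starGraded (hL : B.IsLSeries L) {i : ℕ} {a : A}
    (ha : a ∈ B.starGraded L i) (hbot : L (i + 1) = ⊥) (b : A) :
    B.circ b a = b * a ∧ B.circ a b = a * b ∧ a * b = b * a := by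
  have hba : B.star b a = 1 := by
    simpa only [hbot, Subgroup.mem_bot] using hL.star_mem b ha.1
  have hab : B.star a b = 1 := by
    simpa only [hbot, Subgroup.mem_bot] using ha.2 0 b (hL.mem_zero b)
  have hcomm : b * a * b⁻¹ * a⁻¹ = 1 := by
    simpa only [hbot, Subgroup.mem_bot] using hL.commutator_mem b ha.1
  refine ⟨?_, ?_, ?_⟩
  · rw [B.circ_eq_mul_star_mul, hba, mul_one]
  · rw [B.circ_eq_mul_star_mul, hab, mul_one]
  · rw [← commutatorElement_def, commutatorElement_eq_one_iff_mul_comm] at hcomm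
    exact hcomm.symm

end IsLSeries

end SkewBrace

theorem stmt17_general {A : Type*} [Group A] (B : SkewBrace A)
    (Ls : ℕ → Subgroup A) (hL0 : Ls 0 = ⊤)
    (hLs : ∀ i, Ls (i + 1) = Subgroup.closure
      {x : A | ∃ a b : A, b ∈ Ls i ∧
        (x = a⁻¹ * B.circ a b * b⁻¹ ∨ x = a * b * a⁻¹ * b⁻¹)})
    (k : ℕ) (hk : Ls k = ⊥)
    (gc : ℕ → Set A) (hgc0 : gc 0 = Set.univ)
    (hsub : ∀ i, B.IsCircSubgroup (gc (i + 1)))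
    (hmin : ∀ i, ∀ S : Set A, B.IsCircSubgroup S →
      (∀ a b : A, b ∈ gc i → B.ccomm a b ∈ S) → gc (i + 1) ⊆ S) :
    gc k = {B.e} ∧
    ∀ a ∈ gc (k - 1), ∀ b : A,
      B.circ b a = b * a ∧ B.circ a b = a * b ∧ a * b = b * a := by
  have hL : B.IsLSeries Ls := ⟨hL0, hLs⟩
  have hgraded := hL.subset_starGraded hmin
  have hbot : Ls (k - 1 + 1) = ⊥ := eq_bot_iff.mpr (hk ▸ hL.antitone (by omega))
  refine ⟨Set.Subset.antisymm (fun x hx => ?_) ?_,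
    fun a ha b => hL.annihilates_of_mem_starGraded (hgraded _ ha) hbot b⟩
  · have hx1 : x ∈ Ls k := (hgraded k hx).1
    rw [hk, Subgroup.mem_bot] at hx1
    rw [hx1, B.e_eq_one, Set.mem_singleton_iff]
  · rw [Set.singleton_subset_iff]
    cases k with
    | zero => exact hgc0 ▸ Set.mem_univ _
    | succ m => exact (hsub m).1

/-- Let `A` be an L-nilpotent skew brace of class `k` (the series
`L^{i+1}(A) = ⟨a*b, [a,b]_· : b ∈ L^i(A)⟩` satisfies `L^{k+1}(A) = 1`,
`L^k(A) ≠ 1`; here `Ls i = L^{i+1}(A)`). Then `(A,∘)` is nilpotent of class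
at most `k`: its lower central series `gc` (with `gc i = γ^{i+1}(A,∘)`, the
`∘`-subgroup generated by `∘`-commutators `[a,b]_∘` with `b ∈ gc (i-1)`)
satisfies `gc k = {1}`, and the `k`-th term `γ^k(A,∘) = gc (k-1)` is
contained in the annihilator `Ann(A)`. -/
theorem stmt17 {A : Type*} [Group A] (B : SkewBrace A)
    (Ls : ℕ → Subgroup A) (hL0 : Ls 0 = ⊤)
    (hLs : ∀ i, Ls (i + 1) = Subgroup.closure
      {x : A | ∃ a b : A, b ∈ Ls i ∧
        (x = a⁻¹ * B.circ a b * b⁻¹ ∨ x = a * b * a⁻¹ * b⁻¹)})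
    (k : ℕ) (hk : Ls k = ⊥) (hk' : 1 ≤ k → Ls (k - 1) ≠ ⊥)
    (gc : ℕ → Set A) (hgc0 : gc 0 = Set.univ)
    (hsub : ∀ i, B.IsCircSubgroup (gc (i + 1)))
    (hgen : ∀ i, ∀ a b : A, b ∈ gc i → B.ccomm a b ∈ gc (i + 1))
    (hmin : ∀ i, ∀ S : Set A, B.IsCircSubgroup S →
      (∀ a b : A, b ∈ gc i → B.ccomm a b ∈ S) → gc (i + 1) ⊆ S) :
    gc k = {B.e} ∧
    ∀ a ∈ gc (k - 1), ∀ b : A,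
      B.circ b a = b * a ∧ B.circ a b = a * b ∧ a * b = b * a :=
  stmt17_general B Ls hL0 hLs k hk gc hgc0 hsub hmin
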